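/- arXiv:2503.05178 — 2 statements merged into one kernel-verified Lean document; each statement's English description precedes it below -/
import Mathlib

section
/- Let P be a finite bichromatic point set in the plane in general position with b blue points and b − 3t red points, where t is a nonnegative integer with t ≤ b/3. Then there exists a set of at most ⌈(b − t)/2⌉ triangles such that every blue point of P is contained in some triangle and no triangle contains a red point of P. -/
/-!
Induct on `t`. If `t > 0`, there are at least `|R| + 3` blue points and three of them span a
triangle free of red points: take a blue point `v` that is lowest in a generic direction and order
the other blue points by angle around `v`. By general position, a red point in the triangle spanned
by `v` and two of them lies strictly between the two in this order, so among at least `|R| + 2`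
blue angles two have no red angle between them. Removing those three blue points lowers `b` by 3
and `t` by 1. If `t = 0`, pair up the blue points; by general position the segments avoid the red
points, and `t + ⌈(b - 3t)/2⌉ = ⌈(b - t)/2⌉`.
-/

abbrev Pt := ℝ × ℝ

def GenPos (P : Finset Pt) : Prop :=
  ∀ p ∈ P, ∀ q ∈ P, ∀ r ∈ P, p ≠ q → p ≠ r → q ≠ r → ¬ Collinear ℝ ({p, q, r} : Set Pt)

theorem Finset.exists_lt_forall_notMem_Ioo {α : Type*} [LinearOrder α] (S A : Finset α)
    (h : S.card + 2 ≤ A.card) : ∃ x ∈ A, ∃ y ∈ A, x < y ∧ ∀ s ∈ S, s ∉ Set.Ioo x y := by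
  induction S using Finset.strongInduction generalizing A with
  | H S ih =>
  have hA : A.Nonempty := Finset.card_pos.1 (by omega)
  set x₀ := A.min' hA
  have hA' : (A.erase x₀).Nonempty :=
    Finset.card_pos.1 (by rw [Finset.card_erase_of_mem (A.min'_mem hA)]; omega)
  set x₁ := (A.erase x₀).min' hA'
  have hx₁ : x₁ ∈ A.erase x₀ := Finset.min'_mem _ hA'
  by_cases hgap : ∃ s ∈ S, s ∈ Set.Ioo x₀ x₁
  · obtain ⟨s, hs, hs_gap⟩ := hgap
    have hcard : (S.erase s).card + 2 ≤ (A.erase x₀).card := by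
      have := Finset.card_pos.2 ⟨s, hs⟩
      rw [Finset.card_erase_of_mem hs, Finset.card_erase_of_mem (A.min'_mem hA)]
      omega
    obtain ⟨x, hx, y, hy, hxy, hfree⟩ := ih (S.erase s) (Finset.erase_ssubset hs) _ hcard
    refine ⟨x, Finset.mem_of_mem_erase hx, y, Finset.mem_of_mem_erase hy, hxy, fun s' hs' => ?_⟩
    rcases eq_or_ne s' s with rfl | hne
    · exact fun h => (hs_gap.2.trans_le ((A.erase x₀).min'_le x hx)).not_gt h.1
    · exact hfree s' (Finset.mem_erase.2 ⟨hne, hs'⟩)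
  · push Not at hgap
    exact ⟨x₀, A.min'_mem hA, x₁, Finset.mem_of_mem_erase hx₁,
      A.min'_lt_of_mem_erase_min' hA hx₁, hgap⟩

theorem weighted_mediant_mem_Ioo {a b c d β γ : ℝ} (hb : 0 < b) (hd : 0 < d) (hβ : 0 < β)
    (hγ : 0 < γ) (h : a / b < c / d) :
    (β * a + γ * c) / (β * b + γ * d) ∈ Set.Ioo (a / b) (c / d) := by
  rw [div_lt_div_iff₀ hb hd] at h
  have hden : 0 < β * b + γ * d := by positivity
  constructor
  · rw [div_lt_div_iff₀ hb hden]; nlinarith [mul_lt_mul_of_pos_left h hγ]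
  · rw [div_lt_div_iff₀ hden hd]; nlinarith [mul_lt_mul_of_pos_left h hβ]

theorem collinear_of_sub_eq_smul {V P : Type*} [AddCommGroup V] [Module ℝ V] [AddTorsor V P]
    {v q w : P} {k : ℝ} (h : w -ᵥ v = k • (q -ᵥ v)) : Collinear ℝ ({w, v, q} : Set P) := by
  refine collinear_insert_of_mem_affineSpan_pair ?_
  rw [← vsub_vadd w v, h, ← AffineMap.lineMap_apply]
  exact AffineMap.lineMap_mem_affineSpan_pair k v q

theorem exists_sub_eq_smul_add_smul_of_mem_convexHull {E : Type*} [AddCommGroup E] [Module ℝ E]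
    {v q q' w : E} (hw : w ∈ convexHull ℝ {v, q, q'}) :
    ∃ β γ : ℝ, 0 ≤ β ∧ 0 ≤ γ ∧ w - v = β • (q - v) + γ • (q' - v) := by
  rw [convexHull_insert (Set.insert_nonempty q {q'}), convexHull_pair, mem_convexJoin] at hw
  obtain ⟨v', rfl, z, ⟨μ, μ', hμ, hμ', hμμ, rfl⟩, α, α', hα, hα', hαα, rfl⟩ := hw
  refine ⟨α' * μ, α' * μ', by positivity, by positivity, ?_⟩
  rw [← sub_eq_zero]
  have : α = 1 - α' := by linarith
  have : μ = 1 - μ' := by linarith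
  subst α μ
  module

theorem GenPos.mono {P Q : Finset Pt} (hgp : GenPos Q) (h : P ⊆ Q) : GenPos P :=
  fun p hp q hq r hr => hgp p (h hp) q (h hq) r (h hr)

theorem GenPos.sdiff_left {B R : Finset Pt} (hgp : GenPos (B ∪ R)) (s : Finset Pt) :
    GenPos (B \ s ∪ R) :=
  hgp.mono (Finset.union_subset_union Finset.sdiff_subset subset_rfl)

theorem GenPos.not_collinear_of_disjoint {B R : Finset Pt} (hgp : GenPos (B ∪ R))
    (hd : Disjoint B R) {r p q : Pt} (hr : r ∈ R) (hp : p ∈ B) (hq : q ∈ B) (hpq : p ≠ q) :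
    ¬ Collinear ℝ ({r, p, q} : Set Pt) :=
  hgp r (Finset.mem_union_right B hr) p (Finset.mem_union_left R hp) q
    (Finset.mem_union_left R hq) (Finset.disjoint_right.1 hd hr <| · ▸ hp)
    (Finset.disjoint_right.1 hd hr <| · ▸ hq) hpq

theorem GenPos.notMem_convexHull_pair {B R : Finset Pt} (hgp : GenPos (B ∪ R))
    (hd : Disjoint B R) {r p q : Pt} (hr : r ∈ R) (hp : p ∈ B) (hq : q ∈ B) :
    r ∉ convexHull ℝ {p, q} := by
  rcases eq_or_ne p q with rfl | hpq
  · rw [Set.pair_eq_singleton, convexHull_singleton, Set.mem_singleton_iff]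
    exact (Finset.disjoint_right.1 hd hr <| · ▸ hp)
  · exact fun h => hgp.not_collinear_of_disjoint hd hr hp hq hpq
      (collinear_insert_of_mem_affineSpan_pair (convexHull_subset_affineSpan _ h))

def height (c : ℝ) : Pt →ₗ[ℝ] ℝ := LinearMap.snd ℝ ℝ ℝ + c • LinearMap.fst ℝ ℝ ℝ

theorem height_apply (c : ℝ) (p : Pt) : height c p = p.2 + c * p.1 := rfl

theorem exists_injOn_height (B : Finset Pt) : ∃ c, Set.InjOn (height c) B := by
  -- for `p ≠ q` with `p.1 ≠ q.1`, the only `c` with `height c p = height c q`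
  obtain ⟨c, hc⟩ := Infinite.exists_notMem_finset
    (B.offDiag.image fun pq : Pt × Pt => (pq.2.2 - pq.1.2) / (pq.1.1 - pq.2.1))
  refine ⟨c, fun p hp q hq hpq => by_contra fun hne => hc ?_⟩
  rw [height_apply, height_apply] at hpq
  have hx : p.1 ≠ q.1 := fun hx => hne (Prod.ext hx (by rw [hx] at hpq; linarith))
  refine Finset.mem_image.2 ⟨(p, q), Finset.mem_offDiag.2 ⟨hp, hq, hne⟩, ?_⟩
  rw [div_eq_iff (sub_ne_zero.2 hx)]
  linarith

/-- For `p` with `height c (p - v) > 0`, the first coordinate at which the ray from `v` through `p`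
meets the line `height c (· - v) = 1`. -/
noncomputable def fanSlope (c : ℝ) (v p : Pt) : ℝ := (p - v).1 / height c (p - v)

theorem collinear_of_fanSlope_eq {c : ℝ} {v q q' : Pt} (hq : 0 < height c (q - v))
    (hq' : 0 < height c (q' - v)) (h : fanSlope c v q = fanSlope c v q') :
    Collinear ℝ ({q', v, q} : Set Pt) := by
  refine collinear_of_sub_eq_smul (k := height c (q' - v) / height c (q - v)) ?_
  rw [fanSlope, fanSlope, div_eq_div_iff hq.ne' hq'.ne'] at h
  simp only [height_apply, Prod.fst_sub, Prod.snd_sub, vsub_eq_sub] at h hq ⊢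
  ext <;> simp only [Prod.fst_sub, Prod.snd_sub, Prod.smul_fst, Prod.smul_snd, smul_eq_mul] <;>
    field_simp
  · linear_combination -h
  · linear_combination c * h

theorem fanSlope_mem_Ioo {c : ℝ} {v q q' w : Pt} (hq : 0 < height c (q - v))
    (hq' : 0 < height c (q' - v)) (hlt : fanSlope c v q < fanSlope c v q')
    (hw : w ∈ convexHull ℝ {v, q, q'}) (hwq : ¬ Collinear ℝ ({w, v, q} : Set Pt))
    (hwq' : ¬ Collinear ℝ ({w, v, q'} : Set Pt)) :
    fanSlope c v w ∈ Set.Ioo (fanSlope c v q) (fanSlope c v q') := by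
  obtain ⟨β, γ, hβ, hγ, hwv⟩ := exists_sub_eq_smul_add_smul_of_mem_convexHull hw
  have hβ₀ : β ≠ 0 := by
    rintro rfl
    exact hwq' (collinear_of_sub_eq_smul (k := γ) (by simpa using hwv))
  have hγ₀ : γ ≠ 0 := by
    rintro rfl
    exact hwq (collinear_of_sub_eq_smul (k := β) (by simpa using hwv))
  have hslope : fanSlope c v w = (β * (q - v).1 + γ * (q' - v).1) /
      (β * height c (q - v) + γ * height c (q' - v)) := by
    simp only [fanSlope, hwv, map_add, map_smul, Prod.fst_add, Prod.smul_fst, smul_eq_mul]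
  rw [hslope]
  exact weighted_mediant_mem_Ioo hq hq' (hβ.lt_of_ne' hβ₀) (hγ.lt_of_ne' hγ₀) hlt

theorem exists_triangle_subset_avoiding {B R : Finset Pt} (hgp : GenPos (B ∪ R))
    (hd : Disjoint B R) (h : R.card + 3 ≤ B.card) :
    ∃ s ⊆ B, s.card = 3 ∧ ∀ r ∈ R, r ∉ convexHull ℝ (s : Set Pt) := by
  obtain ⟨c, hc⟩ := exists_injOn_height B
  obtain ⟨v, hv, hmin⟩ := B.exists_min_image (height c) (Finset.card_pos.1 (by omega))
  have hpos : ∀ q ∈ B.erase v, 0 < height c (q - v) := fun q hq => by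
    obtain ⟨hqv, hqB⟩ := Finset.mem_erase.1 hq
    rw [map_sub, sub_pos]
    exact (hmin q hqB).lt_of_ne fun h => hqv (hc hv hqB h).symm
  have hinj : Set.InjOn (fanSlope c v) (B.erase v) := fun q hq q' hq' h => by_contra fun hne => by
    have hB : ∀ p ∈ B.erase v, p ∈ B ∪ R := fun p hp =>
      Finset.mem_union_left R (Finset.mem_of_mem_erase hp)
    exact hgp q' (hB q' hq') v (Finset.mem_union_left R hv) q (hB q hq)
      (Finset.ne_of_mem_erase hq') (Ne.symm hne) (Finset.ne_of_mem_erase hq).symm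
      (collinear_of_fanSlope_eq (hpos q hq) (hpos q' hq') h)
  obtain ⟨x, hx, y, hy, hxy, hfree⟩ := Finset.exists_lt_forall_notMem_Ioo
    (R.image (fanSlope c v)) ((B.erase v).image (fanSlope c v)) (by
      rw [Finset.card_image_of_injOn hinj, Finset.card_erase_of_mem hv]
      have := R.card_image_le (f := fanSlope c v)
      omega)
  obtain ⟨q, hq, rfl⟩ := Finset.mem_image.1 hx
  obtain ⟨q', hq', rfl⟩ := Finset.mem_image.1 hy
  obtain ⟨hqv, hqB⟩ := Finset.mem_erase.1 hq
  obtain ⟨hq'v, hq'B⟩ := Finset.mem_erase.1 hq'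
  refine ⟨{v, q, q'}, ?_, Finset.card_eq_three.2 ⟨v, q, q', hqv.symm, hq'v.symm,
    fun h => hxy.ne (congrArg _ h), rfl⟩, fun r hr hmem => hfree _ (Finset.mem_image_of_mem _ hr)
    (fanSlope_mem_Ioo (hpos q hq) (hpos q' hq') hxy (by simpa using hmem)
      (hgp.not_collinear_of_disjoint hd hr hv hqB hqv.symm)
      (hgp.not_collinear_of_disjoint hd hr hv hq'B hq'v.symm))⟩
  simp [Finset.insert_subset_iff, hv, hqB, hq'B]

def IsTriangleCover (T : Finset (Finset Pt)) (B R : Finset Pt) : Prop :=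
  (∀ s ∈ T, s.Nonempty ∧ s.card ≤ 3) ∧
  (∀ p ∈ B, ∃ s ∈ T, p ∈ convexHull ℝ (s : Set Pt)) ∧
  (∀ s ∈ T, ∀ r ∈ R, r ∉ convexHull ℝ (s : Set Pt))

theorem IsTriangleCover.empty (R : Finset Pt) : IsTriangleCover ∅ ∅ R := by
  simp [IsTriangleCover]

theorem IsTriangleCover.insert {T : Finset (Finset Pt)} {B R s : Finset Pt}
    (hT : IsTriangleCover T (B \ s) R) (hs : s.Nonempty) (hs3 : s.card ≤ 3)
    (hsR : ∀ r ∈ R, r ∉ convexHull ℝ (s : Set Pt)) : IsTriangleCover (insert s T) B R := by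
  obtain ⟨hT3, hTB, hTR⟩ := hT
  refine ⟨?_, fun p hp => ?_, ?_⟩
  · exact Finset.forall_mem_insert _ _ _ |>.2 ⟨⟨hs, hs3⟩, hT3⟩
  · by_cases hps : p ∈ s
    · exact ⟨s, Finset.mem_insert_self s T, subset_convexHull ℝ _ hps⟩
    · obtain ⟨s', hs', hps'⟩ := hTB p (Finset.mem_sdiff.2 ⟨hp, hps⟩)
      exact ⟨s', Finset.mem_insert_of_mem hs', hps'⟩
  · exact Finset.forall_mem_insert _ _ _ |>.2 ⟨hsR, hTR⟩

theorem exists_segment_cover {B R : Finset Pt} (hgp : GenPos (B ∪ R)) (hd : Disjoint B R) :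
    ∃ T, T.card ≤ (B.card + 1) / 2 ∧ IsTriangleCover T B R := by
  induction B using Finset.strongInduction with
  | H B ih =>
  rcases B.eq_empty_or_nonempty with rfl | ⟨p, hp⟩
  · exact ⟨∅, by simp, IsTriangleCover.empty R⟩
  obtain ⟨s, hsB, hs, hs2, hsR⟩ : ∃ s ⊆ B, s.Nonempty ∧ s.card = min 2 B.card ∧
      ∀ r ∈ R, r ∉ convexHull ℝ (s : Set Pt) := by
    obtain ⟨q, hq, hpq⟩ : ∃ q ∈ B, ({p, q} : Finset Pt).card = min 2 B.card := by
      by_cases h2 : 2 ≤ B.card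
      · obtain ⟨q, hq, hqp⟩ := B.exists_mem_ne h2 p
        exact ⟨q, hq, by rw [Finset.card_pair hqp.symm]; omega⟩
      · have := Finset.card_pos.2 ⟨p, hp⟩
        exact ⟨p, hp, by simp; omega⟩
    refine ⟨{p, q}, Finset.insert_subset hp (Finset.singleton_subset_iff.2 hq),
      Finset.insert_nonempty p {q}, hpq, fun r hr => ?_⟩
    simpa using hgp.notMem_convexHull_pair hd hr hp hq
  obtain ⟨T, hT, hcov⟩ := ih _ (Finset.sdiff_ssubset hsB hs) (hgp.sdiff_left s)
    (Finset.disjoint_of_subset_left Finset.sdiff_subset hd)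
  refine ⟨insert s T, ?_, hcov.insert hs (by omega) hsR⟩
  rw [Finset.card_sdiff_of_subset hsB] at hT
  have := Finset.card_insert_le s T
  have := hs.card_pos
  omega

theorem exists_triangle_cover {B R : Finset Pt} (hgp : GenPos (B ∪ R)) (hd : Disjoint B R)
    (t : ℕ) (hcard : R.card + 3 * t = B.card) :
    ∃ T, T.card ≤ (B.card - t + 1) / 2 ∧ IsTriangleCover T B R := by
  induction t generalizing B with
  | zero => simpa using exists_segment_cover hgp hd
  | succ t ih =>
  obtain ⟨s, hsB, hs3, hsR⟩ := exists_triangle_subset_avoiding hgp hd (by omega)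
  have hcard' : R.card + 3 * t = (B \ s).card := by rw [Finset.card_sdiff_of_subset hsB]; omega
  obtain ⟨T, hT, hcov⟩ :=
    ih (hgp.sdiff_left s) (Finset.disjoint_of_subset_left Finset.sdiff_subset hd) hcard'
  refine ⟨insert s T, ?_, hcov.insert (Finset.card_pos.1 (by omega)) hs3.le hsR⟩
  rw [← hcard'] at hT
  have := Finset.card_insert_le s T
  omega

/-- Given `b` blue and `b - 3t` red points in general position (`0 ≤ t ≤ b/3`), there is a set of
at most `⌈(b - t)/2⌉` (possibly degenerate) triangles covering all blue points and avoiding all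
red points. -/
theorem stmt4 (B R : Finset Pt) (t : ℕ) (hdisj : Disjoint B R)
    (hgp : GenPos (B ∪ R)) (hcard : R.card + 3 * t = B.card) :
    ∃ T : Finset (Finset Pt),
      (T.card : ℤ) ≤ ⌈((B.card : ℚ) - t) / 2⌉ ∧
      (∀ s ∈ T, s.Nonempty ∧ s.card ≤ 3) ∧
      (∀ p ∈ B, ∃ s ∈ T, p ∈ convexHull ℝ (↑s : Set Pt)) ∧
      (∀ s ∈ T, ∀ r ∈ R, r ∉ convexHull ℝ (↑s : Set Pt)) := by
  obtain ⟨T, hT, hcover⟩ := exists_triangle_cover hgp hdisj t hcard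
  refine ⟨T, ?_, hcover⟩
  rw [← Nat.cast_sub (by omega : t ≤ B.card), Int.le_ceil_iff]
  have hT2 : (2 * T.card : ℚ) ≤ ((B.card - t : ℕ) : ℚ) + 1 := by exact_mod_cast (by omega)
  push_cast
  linarith
end

section
/- Let P be a bichromatic point set of points lying on a circle, and let 2k be the number of indices (in the cyclic order along the circle) at which two consecutive points have different colors. Then any family of pairwise disjoint closed triangles such that every point of P is contained in some triangle and no triangle contains points of both colors has size at least k + 1 (for k ≥ 0 and P nonempty). -/
open Real Finset

def cross (u v : Pt) : ℝ := u.1 * v.2 - u.2 * v.1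

theorem segment_inter_nonempty_of_cross {A B C D : Pt}
    (hB : cross (C - A) (B - A) < 0) (hD : 0 < cross (C - A) (D - A))
    (hC : cross (D - B) (C - B) < 0) (hA : 0 < cross (D - B) (A - B)) :
    (segment ℝ A C ∩ segment ℝ B D).Nonempty := by
  set X := cross (C - A) (D - B)
  have hX : cross (C - A) (D - A) - cross (C - A) (B - A) = X := by simp [X, cross]; ring
  have hX' : cross (D - B) (A - B) - cross (D - B) (C - B) = X := by simp [X, cross]; ring
  have hXpos : 0 < X := by linarith
  -- The intersection of lines `AC` and `BD`, weighted by the signed areas of the hypotheses.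
  refine ⟨(cross (C - A) (D - A) / X) • B + (-cross (C - A) (B - A) / X) • D, ?_, ?_⟩
  · refine ⟨-cross (D - B) (C - B) / X, cross (D - B) (A - B) / X,
      div_nonneg (by linarith) hXpos.le, by positivity, ?_, ?_⟩
    · field_simp; linarith
    · ext <;> simp [X, cross] <;> field_simp <;> ring
  · exact ⟨_, _, by positivity, div_nonneg (by linarith) hXpos.le, by field_simp; linarith, rfl⟩

noncomputable def circlePt (o : Pt) (ρ θ : ℝ) : Pt := o + ρ • (cos θ, sin θ)

theorem cross_circlePt_sub (o : Pt) (ρ x y z : ℝ) :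
    cross (circlePt o ρ z - circlePt o ρ x) (circlePt o ρ y - circlePt o ρ x)
      = -4 * ρ ^ 2 * (sin ((y - x) / 2) * sin ((z - y) / 2) * sin ((z - x) / 2)) := by
  have hzy : sin ((z - y) / 2) =
      sin ((z + x) / 2) * cos ((y + x) / 2) - cos ((z + x) / 2) * sin ((y + x) / 2) := by
    rw [← sin_sub]; ring_nf
  simp only [cross, circlePt, Prod.fst_sub, Prod.snd_sub, Prod.smul_fst, Prod.smul_snd,
    smul_eq_mul, add_sub_add_left_eq_sub, ← mul_sub]
  rw [cos_sub_cos, sin_sub_sin, sin_sub_sin, cos_sub_cos, hzy]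
  ring

theorem sin_half_sub_pos {a b : ℝ} (hab : a < b) (hba : b - a < 2 * π) : 0 < sin ((b - a) / 2) :=
  sin_pos_of_pos_of_lt_pi (by linarith) (by linarith)

theorem segment_circlePt_inter_nonempty (o : Pt) {ρ : ℝ} (hρ : ρ ≠ 0) {α β γ δ : ℝ}
    (hαβ : α < β) (hβγ : β < γ) (hγδ : γ < δ) (hδα : δ - α < 2 * π) :
    (segment ℝ (circlePt o ρ α) (circlePt o ρ γ) ∩
      segment ℝ (circlePt o ρ β) (circlePt o ρ δ)).Nonempty := by
  have hαβ' := sin_half_sub_pos hαβ (by linarith)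
  have hβγ' := sin_half_sub_pos hβγ (by linarith)
  have hγδ' := sin_half_sub_pos hγδ (by linarith)
  have hαγ' := sin_half_sub_pos (hαβ.trans hβγ) (by linarith)
  have hβδ' := sin_half_sub_pos (hβγ.trans hγδ) (by linarith)
  have hαδ' := sin_half_sub_pos (hαβ.trans (hβγ.trans hγδ)) hδα
  have hρ2 : 0 < 4 * ρ ^ 2 := by positivity
  apply segment_inter_nonempty_of_cross <;>
    simp only [cross_circlePt_sub, ← neg_sub δ γ, ← neg_sub β α, neg_div, sin_neg]
  · nlinarith [mul_pos (mul_pos (mul_pos hρ2 hαβ') hβγ') hαγ']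
  · nlinarith [mul_pos (mul_pos (mul_pos hρ2 hαδ') hγδ') hαγ']
  · nlinarith [mul_pos (mul_pos (mul_pos hρ2 hβγ') hγδ') hβδ']
  · nlinarith [mul_pos (mul_pos (mul_pos hρ2 hαβ') hαδ') hβδ']

section Noncrossing

variable {ι β : Type*} [LinearOrder ι]

def IsNoncrossing (t : ι → β) : Prop :=
  ∀ ⦃a b c d : ι⦄, a < b → b < c → c < d → t a = t c → t b = t d → t a = t b

theorem IsNoncrossing.of_disjoint_convex {E : Type*} [AddCommGroup E] [Module ℝ E]
    {p : ι → E} {t : ι → β} (K : β → Set E) (hK : ∀ i, Convex ℝ (K (t i)))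
    (hp : ∀ i, p i ∈ K (t i)) (hdisj : ∀ i j, t i ≠ t j → Disjoint (K (t i)) (K (t j)))
    (hcross : ∀ ⦃a b c d : ι⦄, a < b → b < c → c < d →
      (segment ℝ (p a) (p c) ∩ segment ℝ (p b) (p d)).Nonempty) :
    IsNoncrossing t := by
  intro a b c d hab hbc hcd hac hbd
  by_contra hne
  obtain ⟨x, hxac, hxbd⟩ := hcross hab hbc hcd
  exact Set.disjoint_left.mp (hdisj a b hne)
    ((hK a).segment_subset (hp a) (hac ▸ hp c) hxac)
    ((hK b).segment_subset (hp b) (hbd ▸ hp d) hxbd)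

theorem IsNoncrossing.first_or_last {t : ι → β} (ht : IsNoncrossing t) {i j : ι} (hij : i ⋖ j)
    (hne : t i ≠ t j) : (∀ k < j, t k ≠ t j) ∨ (∀ l > i, t l ≠ t i) := by
  by_contra! ⟨⟨k, hkj, hk⟩, ⟨l, hil, hl⟩⟩
  have hki : k < i := (hij.le_of_lt hkj).lt_of_ne (by rintro rfl; exact hne hk)
  have hjl : j < l := (hij.ge_of_gt hil).lt_of_ne' (by rintro rfl; exact hne hl.symm)
  exact hne ((ht hki hij.lt hjl hk hl.symm).symm.trans hk)

theorem injOn_firstOccurrence (t : ι → β) : Set.InjOn t {j | ∀ k < j, t k ≠ t j} := by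
  intro i hi j hj hij
  by_contra hne
  rcases lt_or_gt_of_ne hne with h | h
  · exact hj i h hij
  · exact hi j h hij.symm

theorem injOn_lastOccurrence (t : ι → β) : Set.InjOn t {j | ∀ k > j, t k ≠ t j} :=
  injOn_firstOccurrence (ι := ιᵒᵈ) t

end Noncrossing

theorem Fin.covBy_add_one {n : ℕ} {i : Fin (n + 1)} (h : i < Fin.last n) : i ⋖ i + 1 := by
  rw [Fin.covBy_iff, Fin.val_add_one_of_lt h]
  exact Order.covBy_add_one _

theorem IsNoncrossing.card_cyclic_changes_add_one_le {β : Type*} [DecidableEq β] {n : ℕ}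
    {t : Fin (n + 1) → β} (ht : IsNoncrossing t) :
    #{i | t i ≠ t (i + 1)} + 1 ≤ 2 * #(univ.image t) := by
  set F : Finset (Fin (n + 1)) := {i | ∀ k < i + 1, t k ≠ t (i + 1)}
  set L : Finset (Fin (n + 1)) := {i | ∀ k > i, t k ≠ t i}
  have hF : #F ≤ #(univ.image t) := by
    refine card_le_card_of_injOn (fun i => t (i + 1)) (fun i _ => by simp) ?_
    intro i hi j hj hij
    exact add_right_cancel
      (injOn_firstOccurrence t (by simpa [F] using hi) (by simpa [F] using hj) hij)
  have hL : #L ≤ #(univ.image t) :=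
    card_le_card_of_injOn t (fun i _ => by simp) fun i hi j hj hij =>
      injOn_lastOccurrence t (by simpa [L] using hi) (by simpa [L] using hj) hij
  have hlast : Fin.last n ∈ F ∩ L := by
    simp [F, L, Fin.last_add_one, Fin.le_last]
  have hchanges : ({i | t i ≠ t (i + 1)} : Finset _) ⊆ F ∪ L := by
    intro i hi
    rcases (Fin.le_last i).lt_or_eq with hlt | rfl
    · simp only [mem_filter, mem_univ, true_and] at hi
      rcases ht.first_or_last (Fin.covBy_add_one hlt) hi with h | h
      · exact mem_union_left _ (by simpa [F] using h)
      · exact mem_union_right _ (by simpa [L] using h)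
    · exact mem_union_left _ (mem_of_mem_inter_left hlast)
  have hunion := card_union_add_card_inter F L
  have hinter := card_pos.mpr ⟨_, hlast⟩
  have := card_le_card hchanges
  omega

theorem stmt9_general (N k : ℕ) [NeZero N] (o : Pt) (ρ : ℝ) (hρ : 0 < ρ)
    (θ : Fin N → ℝ) (hmono : StrictMono θ)
    (hrange : ∀ i, θ i ∈ Set.Ico 0 (2 * Real.pi))
    (q : Fin N → Pt)
    (hq : ∀ i, q i = o + ρ • (Real.cos (θ i), Real.sin (θ i)))
    (c : Fin N → Bool)
    (hk : 2 * k = (Finset.univ.filter (fun i : Fin N => c i ≠ c (i + 1))).card)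
    (T : Finset (Finset Pt))
    (hdisj : ∀ s ∈ T, ∀ s' ∈ T, s ≠ s' →
      Disjoint (convexHull ℝ (↑s : Set Pt)) (convexHull ℝ (↑s' : Set Pt)))
    (hcover : ∀ i : Fin N, ∃ s ∈ T, q i ∈ convexHull ℝ (↑s : Set Pt))
    (hmonochrome : ∀ s ∈ T, ∀ i j : Fin N,
      q i ∈ convexHull ℝ (↑s : Set Pt) → q j ∈ convexHull ℝ (↑s : Set Pt) → c i = c j) :
    k + 1 ≤ T.card := by
  classical
  obtain ⟨n, rfl⟩ : ∃ n, N = n + 1 := ⟨N - 1, (Nat.succ_pred_eq_of_pos (NeZero.pos N)).symm⟩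
  choose t htT hqt using hcover
  have ht : IsNoncrossing t := by
    refine .of_disjoint_convex (fun s : Finset Pt => convexHull ℝ (↑s : Set Pt))
      (fun _ => convex_convexHull ℝ _) hqt (fun i j hij => hdisj _ (htT i) _ (htT j) hij) ?_
    intro a b c d hab hbc hcd
    simp only [hq]
    exact segment_circlePt_inter_nonempty o hρ.ne' (hmono hab) (hmono hbc) (hmono hcd)
      (by linarith [(hrange a).1, (hrange d).2])
  have hchanges : #{i | c i ≠ c (i + 1)} ≤ #{i | t i ≠ t (i + 1)} :=
    card_le_card <| monotone_filter_right _ fun i _ hc htt =>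
      hc (hmonochrome _ (htT i) _ _ (hqt i) (htt ▸ hqt (i + 1)))
  have himage : #(univ.image t) ≤ #T := card_le_card (image_subset_iff.2 fun i _ => htT i)
  have hcount := ht.card_cyclic_changes_add_one_le
  omega

/-- For bichromatic points `q 0, …, q (N-1)` in cyclic order on a circle with `2k` color changes
between cyclically consecutive points, any family of pairwise disjoint closed triangles covering
all points, with no triangle containing points of both colors, has size at least `k + 1`. -/
theorem stmt9 (N k : ℕ) [NeZero N] (o : Pt) (ρ : ℝ) (hρ : 0 < ρ)
    (θ : Fin N → ℝ) (hmono : StrictMono θ)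
    (hrange : ∀ i, θ i ∈ Set.Ico 0 (2 * Real.pi))
    (q : Fin N → Pt)
    (hq : ∀ i, q i = o + ρ • (Real.cos (θ i), Real.sin (θ i)))
    (c : Fin N → Bool)
    (hk : 2 * k = (Finset.univ.filter (fun i : Fin N => c i ≠ c (i + 1))).card)
    (T : Finset (Finset Pt))
    (htri : ∀ s ∈ T, s.Nonempty ∧ s.card ≤ 3)
    (hdisj : ∀ s ∈ T, ∀ s' ∈ T, s ≠ s' →
      Disjoint (convexHull ℝ (↑s : Set Pt)) (convexHull ℝ (↑s' : Set Pt)))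
    (hcover : ∀ i : Fin N, ∃ s ∈ T, q i ∈ convexHull ℝ (↑s : Set Pt))
    (hmonochrome : ∀ s ∈ T, ∀ i j : Fin N,
      q i ∈ convexHull ℝ (↑s : Set Pt) → q j ∈ convexHull ℝ (↑s : Set Pt) → c i = c j) :
    k + 1 ≤ T.card :=
  stmt9_general N k o ρ hρ θ hmono hrange q hq c hk T hdisj hcover hmonochrome
end
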